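/- If f solves f''' + (m+2) f f'' - (2m+1)(f')^2 = 0 on [ρ, r], then f(r)f''(r) - f(ρ)f''(ρ) - (1/2)(f'(r)² - f'(ρ)²) + (m+2)(f(r)² f'(r) - f(ρ)² f'(ρ)) = (4m+5) ∫_ρ^r f(ξ) f'(ξ)² dξ. -/

import Mathlib

/-!
Multiplying the equation by `f` makes the left-hand side an exact derivative up to a multiple of
`f f'²`: with `E = f f'' - f'²/2 + (m+2) f² f'` one has
`E' = f (f''' + (m+2) f f'' - (2m+1) f'²) + (4m+5) f f'²`,
so along a solution `E' = (4m+5) f f'²`, and the identity is the fundamental theorem of calculus.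
-/

open Set

section Energy

variable (m : ℝ) {f f' f'' f''' : ℝ → ℝ} {t : ℝ}

noncomputable def energy (f f' f'' : ℝ → ℝ) (t : ℝ) : ℝ :=
  f t * f'' t - 1 / 2 * f' t ^ 2 + (m + 2) * (f t ^ 2 * f' t)

theorem hasDerivAt_energy (h₀ : HasDerivAt f (f' t) t) (h₁ : HasDerivAt f' (f'' t) t)
    (h₂ : HasDerivAt f'' (f''' t) t) :
    HasDerivAt (energy m f f' f'')
      (f t * (f''' t + (m + 2) * f t * f'' t - (2 * m + 1) * f' t ^ 2)
        + (4 * m + 5) * (f t * f' t ^ 2)) t := by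
  refine (((h₀.mul h₂).sub ((h₁.pow 2).const_mul (1 / 2))).add
    (((h₀.pow 2).mul h₁).const_mul (m + 2))).congr_deriv ?_
  simp only [Pi.pow_apply]
  push_cast
  ring

theorem energy_sub_eq_integral {a b : ℝ} (hab : a ≤ b)
    (h₀ : ∀ t ∈ Icc a b, HasDerivAt f (f' t) t) (h₁ : ∀ t ∈ Icc a b, HasDerivAt f' (f'' t) t)
    (h₂ : ∀ t ∈ Icc a b, HasDerivAt f'' (f''' t) t)
    (hode : ∀ t ∈ Icc a b, f''' t + (m + 2) * f t * f'' t - (2 * m + 1) * f' t ^ 2 = 0)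
    (hint : IntervalIntegrable (fun t ↦ f t * f' t ^ 2) MeasureTheory.volume a b) :
    energy m f f' f'' b - energy m f f' f'' a
      = (4 * m + 5) * ∫ t in a..b, f t * f' t ^ 2 := by
  rw [← intervalIntegral.integral_const_mul]
  refine (intervalIntegral.integral_eq_sub_of_hasDerivAt (fun t ht ↦ ?_)
    (hint.const_mul _)).symm
  rw [uIcc_of_le hab] at ht
  simpa [hode t ht] using hasDerivAt_energy m (h₀ t ht) (h₁ t ht) (h₂ t ht)

end Energy

theorem ContDiff.hasDerivAt_iteratedDeriv {f : ℝ → ℝ} {n : WithTop ℕ∞} (hf : ContDiff ℝ n f)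
    {k : ℕ} (hk : k < n) (t : ℝ) :
    HasDerivAt (iteratedDeriv k f) (iteratedDeriv (k + 1) f t) t := by
  rw [iteratedDeriv_succ]
  exact (hf.differentiable_iteratedDeriv k hk t).hasDerivAt

theorem stmt_7 (m ρ r : ℝ) (hρr : ρ ≤ r)
    (f : ℝ → ℝ) (hf : ContDiff ℝ 3 f)
    (hode : ∀ t ∈ Set.Icc ρ r, iteratedDeriv 3 f t + (m + 2) * f t * iteratedDeriv 2 f t
      - (2 * m + 1) * (deriv f t) ^ 2 = 0) :
    f r * iteratedDeriv 2 f r - f ρ * iteratedDeriv 2 f ρ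
      - (1/2) * ((deriv f r) ^ 2 - (deriv f ρ) ^ 2)
      + (m + 2) * (f r ^ 2 * deriv f r - f ρ ^ 2 * deriv f ρ)
      = (4 * m + 5) * ∫ ξ in ρ..r, f ξ * (deriv f ξ) ^ 2 := by
  have h₀ (t : ℝ) : HasDerivAt f (deriv f t) t := by
    simpa using hf.hasDerivAt_iteratedDeriv (k := 0) (by norm_num) t
  have h₁ (t : ℝ) : HasDerivAt (deriv f) (iteratedDeriv 2 f t) t := by
    simpa using hf.hasDerivAt_iteratedDeriv (k := 1) (by norm_num) t
  have h₂ (t : ℝ) : HasDerivAt (iteratedDeriv 2 f) (iteratedDeriv 3 f t) t :=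
    hf.hasDerivAt_iteratedDeriv (k := 2) (by norm_num) t
  have hint : IntervalIntegrable (fun t ↦ f t * deriv f t ^ 2) MeasureTheory.volume ρ r :=
    (hf.continuous.mul ((hf.continuous_deriv (by norm_num)).pow 2)).intervalIntegrable ρ r
  rw [← energy_sub_eq_integral m hρr (fun t _ ↦ h₀ t) (fun t _ ↦ h₁ t) (fun t _ ↦ h₂ t) hode hint]
  simp only [energy]
  ring
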